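/- For every ℓ ∈ [0,1) there exists a constant C > 0, independent of N, such that for all N ≥ 1 and all u, v ∈ H^ℓ(ℝ) with I_N u, I_N v ∈ H¹(ℝ), the function h whose Fourier transform is ĥ(ξ) = iξ m_N(ξ) (1+ξ²)⁻¹ (uv)^(ξ) (i.e. h = (I−∂ₓₓ)⁻¹ I_N ∂ₓ(uv)) belongs to H¹(ℝ) and satisfies ‖h‖_{H¹} ≤ C ‖I_N u‖_{H¹} ‖I_N v‖_{H¹}. -/

import Mathlib

noncomputable section

open MeasureTheory Real Set Filter
open scoped ENNReal NNReal Convolution ComplexConjugate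

/-- Frequency-side state space `L²(ℝ, ℂ)`: an element represents the Fourier–Plancherel
transform `ĝ` of a function `g ∈ L²(ℝ)` (unitary normalization, so that Plancherel is an
isometry and `(uv)^ = û ⋆ v̂`). -/
abbrev V : Type := Lp ℂ 2 (volume : Measure ℝ)

/-- The I-method multiplier `m_N(ξ) = min (1, (|ξ|/N)^{ℓ-1})`, with `m_N 0 = 1`. -/
def mN (ℓ N ξ : ℝ) : ℝ := if ξ = 0 then 1 else min 1 ((|ξ| / N) ^ (ℓ - 1))

/-- The `H^s` norm, frequency side: `(∫ (1+ξ²)^s |ĝ(ξ)|² dξ)^{1/2}`. -/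
def HsE (s : ℝ) (G : ℝ → ℂ) : ℝ≥0∞ :=
  (∫⁻ ξ : ℝ, ENNReal.ofReal ((1 + ξ ^ 2) ^ s) * (‖G ξ‖₊ : ℝ≥0∞) ^ 2) ^ (1 / 2 : ℝ)

/-- The `H^s` norm as a real number. -/
def Hr (s : ℝ) (G : ℝ → ℂ) : ℝ := (HsE s G).toReal

/-- Membership in `H^s`, frequency side. -/
def MemHs (s : ℝ) (G : ℝ → ℂ) : Prop :=
  AEStronglyMeasurable G volume ∧ HsE s G < ⊤

/-- Applying the operator `I_N`, frequency side. -/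
def IN (ℓ N : ℝ) (G : ℝ → ℂ) : ℝ → ℂ := fun ξ => (mN ℓ N ξ : ℂ) * G ξ

/-- The `Y^s_{τ,T}` norm of a curve of (frequency-side) functions. -/
def YE (s τ T : ℝ) (u : ℝ → ℝ → ℂ) : ℝ≥0∞ :=
  (⨆ t ∈ Icc τ (τ + T), HsE s (u t)) +
    (∫⁻ t in Icc τ (τ + T), HsE s (u t) ^ 2) ^ (1 / 2 : ℝ)

/-- Continuity of a curve in the `H^s` norm. -/
def HContOn (s : ℝ) (Q : ℝ → V) (A : Set ℝ) : Prop :=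
  ∀ t ∈ A, ∀ ε : ℝ≥0∞, 0 < ε → ∃ δ > (0 : ℝ), ∀ t' ∈ A, |t' - t| < δ →
    HsE s ((Q t' - Q t : V) : ℝ → ℂ) < ε

/-- Frequency side of the product of two `L²` functions: `(uv)^ = û ⋆ v̂`. -/
def prodHat (U W : ℝ → ℂ) : ℝ → ℂ :=
  convolution U W (ContinuousLinearMap.mul ℂ ℂ) volume

lemma memLp_resolventFun (g : V) :
    MemLp (fun ξ : ℝ => (((1 + ξ ^ 2)⁻¹ : ℝ) : ℂ) * (g : ℝ → ℂ) ξ) 2 (volume : Measure ℝ) := by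
  refine (Lp.memLp g).of_le ?_ ?_
  · exact (Complex.continuous_ofReal.comp ((continuous_const.add (continuous_pow 2)).inv₀ (fun ξ => (by positivity : (1 : ℝ) + ξ ^ 2 ≠ 0)))).aestronglyMeasurable.mul
      (Lp.aestronglyMeasurable g)
  · filter_upwards with ξ
    have h0 : (0 : ℝ) < 1 + ξ ^ 2 := by positivity
    have h1 : ‖(((1 + ξ ^ 2)⁻¹ : ℝ) : ℂ)‖ ≤ 1 := by
      rw [Complex.norm_real, Real.norm_eq_abs, abs_of_pos (by positivity)]
      rw [inv_le_one_iff₀]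
      right; nlinarith
    calc ‖(((1 + ξ ^ 2)⁻¹ : ℝ) : ℂ) * (g : ℝ → ℂ) ξ‖
        = ‖(((1 + ξ ^ 2)⁻¹ : ℝ) : ℂ)‖ * ‖(g : ℝ → ℂ) ξ‖ := norm_mul _ _
      _ ≤ 1 * ‖(g : ℝ → ℂ) ξ‖ := by gcongr
      _ = ‖(g : ℝ → ℂ) ξ‖ := one_mul _

/-- The resolvent `(I − ∂ₓₓ)⁻¹`, frequency side, as a map `L² → L²`. -/
def resolv (g : V) : V := MemLp.toLp _ (memLp_resolventFun g)

/-- Frequency side of `(I − ∂ₓₓ)⁻¹ ∂ₓ (u²)`. -/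
def NLterm (g : V) : ℝ → ℂ := fun ξ =>
  Complex.I * ξ * (((1 + ξ ^ 2)⁻¹ : ℝ) : ℂ) * prodHat (g : ℝ → ℂ) (g : ℝ → ℂ) ξ

/-- `U` is (the frequency side of) a global mild solution of the forced damped BBM equation
`u_t − u_{xxt} + u − u_{xx} + u u_x = f` with initial data `Φ` and force `F`. -/
def IsGlobalMildSolution (ℓ : ℝ) (F : ℝ → V) (Φ : V) (U : ℝ → V) : Prop :=
  HContOn ℓ U (Ici 0) ∧ U 0 = Φ ∧
  ∃ W : ℝ → V,
    (∀ s : ℝ, (W s : ℝ → ℂ) =ᵐ[volume] NLterm (U s)) ∧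
    ∀ t ≥ (0 : ℝ), U t = Real.exp (-t) • Φ +
      ∫ s in (0 : ℝ)..t, Real.exp (-(t - s)) • (resolv (F s) - (2⁻¹ : ℝ) • W s)

/-- `U` is (the frequency side of) a mild solution on `[0, T]`. -/
def IsMildSolutionOn (ℓ T : ℝ) (F : ℝ → V) (Φ : V) (U : ℝ → V) : Prop :=
  HContOn ℓ U (Icc 0 T) ∧ U 0 = Φ ∧
  ∃ W : ℝ → V,
    (∀ s : ℝ, (W s : ℝ → ℂ) =ᵐ[volume] NLterm (U s)) ∧
    ∀ t ∈ Icc (0 : ℝ) T, U t = Real.exp (-t) • Φ +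
      ∫ s in (0 : ℝ)..t, Real.exp (-(t - s)) • (resolv (F s) - (2⁻¹ : ℝ) • W s)

/-- Frequency side of `(I − ∂ₓₓ)⁻¹ I_N ∂ₓ (½q² + qv + ½v²)`. -/
def NL2 (ℓ N : ℝ) (q v : V) : ℝ → ℂ := fun ξ =>
  Complex.I * ξ * (mN ℓ N ξ : ℂ) * (((1 + ξ ^ 2)⁻¹ : ℝ) : ℂ) *
    ((2⁻¹ : ℂ) * prodHat (q : ℝ → ℂ) (q : ℝ → ℂ) ξ +
      prodHat (q : ℝ → ℂ) (v : ℝ → ℂ) ξ +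
      (2⁻¹ : ℂ) * prodHat (v : ℝ → ℂ) (v : ℝ → ℂ) ξ)

section Stmt4Aux
variable {ℓ N : ℝ}

lemma mN_nonneg (hN : 1 ≤ N) (ξ : ℝ) : 0 ≤ mN ℓ N ξ := by
  unfold mN; split_ifs with h0
  · norm_num
  · have : (0:ℝ) < |ξ| / N := div_pos (abs_pos.mpr h0) (by linarith)
    exact le_min zero_le_one (Real.rpow_nonneg this.le _)

lemma mN_le_one (ξ : ℝ) : mN ℓ N ξ ≤ 1 := by
  unfold mN; split_ifs with h0
  · exact le_refl 1
  · exact min_le_left _ _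

lemma mN_eq_one (hl1 : ℓ < 1) (hN : 1 ≤ N) {ξ : ℝ} (hξ : |ξ| ≤ N) : mN ℓ N ξ = 1 := by
  unfold mN; split_ifs with h0
  · rfl
  · refine min_eq_left ?_
    refine Real.one_le_rpow_of_pos_of_le_one_of_nonpos
      (div_pos (abs_pos.mpr h0) (by linarith)) ?_ (by linarith)
    exact (div_le_one (by linarith)).mpr hξ

lemma mN_eq_rpow (hl1 : ℓ < 1) (hN : 1 ≤ N) {ξ : ℝ} (hξ : N ≤ |ξ|) :
    mN ℓ N ξ = (|ξ| / N) ^ (ℓ - 1) := by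
  have h0 : ξ ≠ 0 := by
    intro h; rw [h] at hξ; simp at hξ; linarith
  unfold mN; rw [if_neg h0]
  exact min_eq_right (Real.rpow_le_one_of_one_le_of_nonpos
    ((one_le_div (by linarith)).mpr hξ) (by linarith))

lemma abs_le_sqrt_one_add (ξ : ℝ) : |ξ| ≤ Real.sqrt (1 + ξ ^ 2) := by
  rw [← Real.sqrt_sq_eq_abs]
  exact Real.sqrt_le_sqrt (by nlinarith)

lemma sqrt_one_add_le (ξ : ℝ) : Real.sqrt (1 + ξ ^ 2) ≤ 1 + |ξ| := by
  have h : Real.sqrt (1 + ξ ^ 2) ≤ Real.sqrt ((1 + |ξ|) ^ 2) :=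
    Real.sqrt_le_sqrt (by nlinarith [abs_nonneg ξ, sq_abs ξ])
  rwa [Real.sqrt_sq (by positivity)] at h

lemma M_lb_high (hl1 : ℓ < 1) (hN : 1 ≤ N) {ξ : ℝ} (hξ : N ≤ |ξ|) :
    N * (|ξ| / N) ^ ℓ ≤ Real.sqrt (1 + ξ ^ 2) * mN ℓ N ξ := by
  rw [mN_eq_rpow hl1 hN hξ]
  have hNpos : (0:ℝ) < N := by linarith
  have hd : (0:ℝ) < |ξ| / N := by
    have : (0:ℝ) < |ξ| := by linarith
    positivity
  have h1 : N * (|ξ| / N) ^ ℓ = |ξ| * (|ξ| / N) ^ (ℓ - 1) := by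
    rw [show ℓ = (ℓ - 1) + 1 by ring, Real.rpow_add hd, Real.rpow_one]
    field_simp; ring
  rw [h1]
  exact mul_le_mul_of_nonneg_right (abs_le_sqrt_one_add ξ) (Real.rpow_nonneg hd.le _)

lemma M_ge_one (hl0 : 0 ≤ ℓ) (hl1 : ℓ < 1) (hN : 1 ≤ N) (ξ : ℝ) :
    1 ≤ Real.sqrt (1 + ξ ^ 2) * mN ℓ N ξ := by
  rcases le_total |ξ| N with h | h
  · rw [mN_eq_one hl1 hN h, mul_one, Real.one_le_sqrt]
    nlinarith
  · refine le_trans ?_ (M_lb_high hl1 hN h)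
    have h1 : 1 ≤ (|ξ| / N) ^ ℓ :=
      Real.one_le_rpow ((one_le_div (by linarith)).mpr h) hl0
    nlinarith

lemma M_ge_min (hl0 : 0 ≤ ℓ) (hl1 : ℓ < 1) (hN : 1 ≤ N) (ξ : ℝ) :
    min |ξ| N ≤ Real.sqrt (1 + ξ ^ 2) * mN ℓ N ξ := by
  rcases le_total |ξ| N with h | h
  · rw [mN_eq_one hl1 hN h, mul_one]
    exact le_trans (min_le_left _ _) (abs_le_sqrt_one_add ξ)
  · refine le_trans (min_le_right _ _) (le_trans ?_ (M_lb_high hl1 hN h))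
    have h1 : 1 ≤ (|ξ| / N) ^ ℓ :=
      Real.one_le_rpow ((one_le_div (by linarith)).mpr h) hl0
    nlinarith

lemma M_doub (hl0 : 0 ≤ ℓ) (hl1 : ℓ < 1) (hN : 1 ≤ N) {ξ η : ℝ} (h : |ξ| ≤ 2 * |η|) :
    Real.sqrt (1 + ξ ^ 2) * mN ℓ N ξ ≤ 8 * (Real.sqrt (1 + η ^ 2) * mN ℓ N η) := by
  have hMη1 : 1 ≤ Real.sqrt (1 + η ^ 2) * mN ℓ N η := M_ge_one hl0 hl1 hN η
  have hsub := sqrt_one_add_le ξ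
  have hsnn : (0:ℝ) ≤ Real.sqrt (1 + ξ ^ 2) := Real.sqrt_nonneg _
  rcases le_total |ξ| N with hr | hr
  · have hMξ : Real.sqrt (1 + ξ ^ 2) * mN ℓ N ξ ≤ 1 + |ξ| := by
      calc Real.sqrt (1 + ξ ^ 2) * mN ℓ N ξ ≤ Real.sqrt (1 + ξ ^ 2) * 1 :=
            mul_le_mul_of_nonneg_left (mN_le_one ξ) hsnn
        _ = Real.sqrt (1 + ξ ^ 2) := mul_one _
        _ ≤ 1 + |ξ| := hsub
    rcases le_total |η| N with hs | hs
    · have h2 : |η| ≤ Real.sqrt (1 + η ^ 2) * mN ℓ N η := by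
        have := M_ge_min hl0 hl1 hN η; rw [min_eq_left hs] at this; exact this
      linarith
    · have h2 : N ≤ Real.sqrt (1 + η ^ 2) * mN ℓ N η := by
        have := M_ge_min hl0 hl1 hN η; rw [min_eq_right hs] at this; exact this
      linarith
  · have hNpos : (0:ℝ) < N := by linarith
    have hd : (0:ℝ) < |ξ| / N := by
      have : (0:ℝ) < |ξ| := by linarith
      positivity
    have hMξ : Real.sqrt (1 + ξ ^ 2) * mN ℓ N ξ ≤ 2 * (N * (|ξ| / N) ^ ℓ) := by
      rw [mN_eq_rpow hl1 hN hr]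
      have h1 : Real.sqrt (1 + ξ ^ 2) ≤ 2 * |ξ| := by linarith
      have h2 : N * (|ξ| / N) ^ ℓ = |ξ| * (|ξ| / N) ^ (ℓ - 1) := by
        rw [show ℓ = (ℓ - 1) + 1 by ring, Real.rpow_add hd, Real.rpow_one]
        field_simp; ring
      calc Real.sqrt (1 + ξ ^ 2) * (|ξ| / N) ^ (ℓ - 1) ≤ 2 * |ξ| * (|ξ| / N) ^ (ℓ - 1) :=
            mul_le_mul_of_nonneg_right h1 (Real.rpow_nonneg hd.le _)
        _ = 2 * (N * (|ξ| / N) ^ ℓ) := by rw [h2]; ring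
    have h2l : (2:ℝ) ^ ℓ ≤ 2 := by
      calc (2:ℝ) ^ ℓ ≤ (2:ℝ) ^ (1:ℝ) :=
            Real.rpow_le_rpow_of_exponent_le one_le_two hl1.le
        _ = 2 := Real.rpow_one 2
    rcases le_total N |η| with hs | hs
    · have key : (|ξ| / N) ^ ℓ ≤ 2 * (|η| / N) ^ ℓ := by
        have hη0 : (0:ℝ) < |η| := by linarith
        calc (|ξ| / N) ^ ℓ ≤ (2 * (|η| / N)) ^ ℓ := by
              refine Real.rpow_le_rpow hd.le ?_ hl0
              rw [div_le_iff₀ hNpos] at *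
              calc |ξ| ≤ 2 * |η| := h
                _ = 2 * (|η| / N) * N := by field_simp
          _ = 2 ^ ℓ * (|η| / N) ^ ℓ := Real.mul_rpow (by norm_num) (by positivity)
          _ ≤ 2 * (|η| / N) ^ ℓ :=
              mul_le_mul_of_nonneg_right h2l (Real.rpow_nonneg (by positivity) _)
      have hMη := M_lb_high hl1 hN hs
      have hnn : (0:ℝ) ≤ N * (|η| / N) ^ ℓ := by positivity
      nlinarith
    · have hx2 : (|ξ| / N) ^ ℓ ≤ 2 := by
        calc (|ξ| / N) ^ ℓ ≤ (2:ℝ) ^ ℓ := by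
              refine Real.rpow_le_rpow hd.le ?_ hl0
              rw [div_le_iff₀ hNpos]
              linarith
          _ ≤ 2 := h2l
      have h2 : |η| ≤ Real.sqrt (1 + η ^ 2) * mN ℓ N η := by
        have := M_ge_min hl0 hl1 hN η; rw [min_eq_left hs] at this; exact this
      nlinarith

lemma M_submul (hl0 : 0 ≤ ℓ) (hl1 : ℓ < 1) (hN : 1 ≤ N) (ξ η : ℝ) :
    Real.sqrt (1 + ξ ^ 2) * mN ℓ N ξ ≤
      8 * (Real.sqrt (1 + η ^ 2) * mN ℓ N η) *
        (Real.sqrt (1 + (ξ - η) ^ 2) * mN ℓ N (ξ - η)) := by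
  have h1 := M_ge_one hl0 hl1 hN η
  have h2 := M_ge_one hl0 hl1 hN (ξ - η)
  have htri : |ξ| ≤ |η| + |ξ - η| := by
    calc |ξ| = |η + (ξ - η)| := by ring_nf
      _ ≤ |η| + |ξ - η| := abs_add_le _ _
  rcases le_total |ξ - η| |η| with hc | hc
  · have hd := M_doub hl0 hl1 hN (ξ := ξ) (η := η) (by linarith)
    nlinarith
  · have hd := M_doub hl0 hl1 hN (ξ := ξ) (η := ξ - η) (by linarith)
    nlinarith

end Stmt4Aux

/-- Bilinear estimate: `h = (I−∂ₓₓ)⁻¹ I_N ∂ₓ(uv)` belongs to `H¹` and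
`‖h‖_{H¹} ≤ C ‖I_N u‖_{H¹} ‖I_N v‖_{H¹}`, with `C` independent of `N`
(frequency side: `ĥ(ξ) = iξ m_N(ξ) (1+ξ²)⁻¹ (uv)^(ξ)`, `(uv)^ = û ⋆ v̂`). -/

theorem stmt4 (ℓ : ℝ) (hl0 : 0 ≤ ℓ) (hl1 : ℓ < 1) :
    ∃ C > (0 : ℝ), ∀ N : ℝ, 1 ≤ N → ∀ U W : ℝ → ℂ,
      MemHs ℓ U → MemHs ℓ W → MemHs 1 (IN ℓ N U) → MemHs 1 (IN ℓ N W) →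
      MemHs 1 (fun ξ : ℝ =>
        Complex.I * ξ * (mN ℓ N ξ : ℂ) * (((1 + ξ ^ 2)⁻¹ : ℝ) : ℂ) * prodHat U W ξ) ∧
      HsE 1 (fun ξ : ℝ =>
          Complex.I * ξ * (mN ℓ N ξ : ℂ) * (((1 + ξ ^ 2)⁻¹ : ℝ) : ℂ) * prodHat U W ξ) ≤
        ENNReal.ofReal C * (HsE 1 (IN ℓ N U) * HsE 1 (IN ℓ N W)) := by
  refine ⟨16, by norm_num, ?_⟩
  intro N hN U W hU hW hIU hIW
  set Mf : ℝ → ℝ := fun ξ => Real.sqrt (1 + ξ ^ 2) * mN ℓ N ξ with hMfdef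
  have hMf0 : ∀ ξ, 0 ≤ Mf ξ := fun ξ => le_trans zero_le_one (M_ge_one hl0 hl1 hN ξ)
  set f : ℝ → ℝ≥0∞ := fun η => ENNReal.ofReal (Mf η) * (‖U η‖₊ : ℝ≥0∞) with hfdef
  set g : ℝ → ℝ≥0∞ := fun η => ENNReal.ofReal (Mf η) * (‖W η‖₊ : ℝ≥0∞) with hgdef
  set h : ℝ → ℂ := fun ξ : ℝ =>
    Complex.I * ξ * (mN ℓ N ξ : ℂ) * (((1 + ξ ^ 2)⁻¹ : ℝ) : ℂ) * prodHat U W ξ with hhdef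
  -- measurability of mN and Mf
  have hmN : Measurable (mN ℓ N) := by
    unfold mN
    have hb : Measurable fun ξ : ℝ => min 1 ((|ξ| / N) ^ (ℓ - 1)) := by measurability
    exact Measurable.ite measurableSet_eq measurable_const hb
  have hMfm : Measurable Mf :=
    ((Real.continuous_sqrt.comp (continuous_const.add (continuous_pow 2))).measurable).mul hmN
  have hfm : AEMeasurable f volume :=
    ((ENNReal.measurable_ofReal.comp hMfm).aemeasurable).mul hU.1.enorm
  have hgm : AEMeasurable g volume :=
    ((ENNReal.measurable_ofReal.comp hMfm).aemeasurable).mul hW.1.enorm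
  -- identification of the H¹ norm of IN applied functions
  have hAeq : ∀ G : ℝ → ℂ, HsE 1 (IN ℓ N G) =
      (∫⁻ ξ : ℝ, (ENNReal.ofReal (Mf ξ) * (‖G ξ‖₊ : ℝ≥0∞)) ^ 2) ^ (1 / 2 : ℝ) := by
    intro G
    unfold HsE IN
    congr 1
    refine lintegral_congr fun ξ => ?_
    have hmn := mN_nonneg (ℓ := ℓ) hN ξ
    have h1 : ‖(↑(mN ℓ N ξ) : ℂ) * G ξ‖ = mN ℓ N ξ * ‖G ξ‖ := by
      rw [norm_mul, Complex.norm_real, Real.norm_eq_abs, abs_of_nonneg hmn]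
    rw [← enorm_eq_nnnorm, ← enorm_eq_nnnorm, ← ofReal_norm, ← ofReal_norm, h1,
      ← ENNReal.ofReal_pow (by positivity), ← ENNReal.ofReal_mul (by positivity),
      ← ENNReal.ofReal_mul (hMf0 ξ), ← ENNReal.ofReal_pow (by positivity)]
    congr 1
    rw [Real.rpow_one]
    have hs : Real.sqrt (1 + ξ ^ 2) ^ 2 = 1 + ξ ^ 2 := Real.sq_sqrt (by positivity)
    simp only [hMfdef]
    rw [mul_pow, mul_pow, mul_pow, hs]
    ring
  set A := HsE 1 (IN ℓ N U) with hA
  set B := HsE 1 (IN ℓ N W) with hB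
  have hAf : A = (∫⁻ ξ : ℝ, f ξ ^ 2) ^ (1 / 2 : ℝ) := hAeq U
  have hBf : B = (∫⁻ ξ : ℝ, g ξ ^ 2) ^ (1 / 2 : ℝ) := hAeq W
  -- Cauchy–Schwarz
  have hconj : Real.HolderConjugate 2 2 := ⟨by norm_num, by norm_num, by norm_num⟩
  have hCS : ∀ ξ : ℝ, (∫⁻ η : ℝ, f η * g (ξ - η)) ≤ A * B := by
    intro ξ
    have hmp : MeasurePreserving (fun η : ℝ => ξ - η) volume volume :=
      Measure.measurePreserving_sub_left volume ξ
    have hgξ : AEMeasurable (fun η : ℝ => g (ξ - η)) volume :=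
      hgm.comp_quasiMeasurePreserving hmp.quasiMeasurePreserving
    have h2 : (∫⁻ η : ℝ, g (ξ - η) ^ 2) = ∫⁻ η : ℝ, g η ^ 2 :=
      hmp.lintegral_comp_emb (Homeomorph.subLeft ξ).measurableEmbedding (fun η => g η ^ 2)
    have := ENNReal.lintegral_mul_le_Lp_mul_Lq volume hconj hfm hgξ
    simp only [Pi.mul_apply] at this
    refine le_trans this ?_
    rw [hAf, hBf]
    simp_rw [show ((2:ℝ)) = ((2:ℕ):ℝ) by norm_num, ENNReal.rpow_natCast]
    rw [h2]
  -- pointwise bound on ‖h‖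
  have hnorm : ∀ ξ : ℝ, Real.sqrt (1 + ξ ^ 2) * ‖h ξ‖ ≤ mN ℓ N ξ * ‖prodHat U W ξ‖ := by
    intro ξ
    have hmn := mN_nonneg (ℓ := ℓ) hN ξ
    have h1 : ‖h ξ‖ = |ξ| * mN ℓ N ξ * (1 + ξ ^ 2)⁻¹ * ‖prodHat U W ξ‖ := by
      simp only [hhdef, norm_mul, Complex.norm_real, Complex.norm_I, Real.norm_eq_abs,
        abs_of_nonneg hmn, abs_of_nonneg (show (0:ℝ) ≤ (1 + ξ ^ 2)⁻¹ by positivity), one_mul]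
    rw [h1]
    have hs : Real.sqrt (1 + ξ ^ 2) * Real.sqrt (1 + ξ ^ 2) = 1 + ξ ^ 2 :=
      Real.mul_self_sqrt (by positivity)
    have hle := abs_le_sqrt_one_add ξ
    have hp : (0:ℝ) < 1 + ξ ^ 2 := by positivity
    have hPn : (0:ℝ) ≤ ‖prodHat U W ξ‖ := norm_nonneg _
    have key : Real.sqrt (1 + ξ ^ 2) * (|ξ| * mN ℓ N ξ * (1 + ξ ^ 2)⁻¹) ≤ mN ℓ N ξ := by
      rw [mul_comm, mul_assoc, mul_assoc]
      have : |ξ| * (mN ℓ N ξ * ((1 + ξ ^ 2)⁻¹ * Real.sqrt (1 + ξ ^ 2))) ≤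
          Real.sqrt (1 + ξ ^ 2) * (mN ℓ N ξ * ((1 + ξ ^ 2)⁻¹ * Real.sqrt (1 + ξ ^ 2))) := by
        refine mul_le_mul_of_nonneg_right hle (by positivity)
      refine le_trans this (le_of_eq ?_)
      field_simp
      nlinarith [Real.sqrt_nonneg (1 + ξ ^ 2)]
    calc Real.sqrt (1 + ξ ^ 2) * (|ξ| * mN ℓ N ξ * (1 + ξ ^ 2)⁻¹ * ‖prodHat U W ξ‖)
        = (Real.sqrt (1 + ξ ^ 2) * (|ξ| * mN ℓ N ξ * (1 + ξ ^ 2)⁻¹)) * ‖prodHat U W ξ‖ := by ring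
      _ ≤ mN ℓ N ξ * ‖prodHat U W ξ‖ := mul_le_mul_of_nonneg_right key hPn
  -- convolution bound
  have hPbound : ∀ ξ : ℝ, (‖prodHat U W ξ‖₊ : ℝ≥0∞) ≤
      ∫⁻ η : ℝ, (‖U η‖₊ : ℝ≥0∞) * (‖W (ξ - η)‖₊ : ℝ≥0∞) := by
    intro ξ
    have hc : prodHat U W ξ = ∫ η : ℝ, U η * W (ξ - η) := by
      simp [prodHat, convolution_def, ContinuousLinearMap.mul_apply']
    rw [hc]
    refine le_trans (enorm_integral_le_lintegral_enorm _) (le_of_eq ?_)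
    refine lintegral_congr fun η => ?_
    simp [nnnorm_mul]; rfl
  -- the full pointwise bound
  have hpt : ∀ ξ : ℝ, ENNReal.ofReal ((1 + ξ ^ 2) ^ (1:ℝ)) * (‖h ξ‖₊ : ℝ≥0∞) ^ 2 ≤
      (64 * (A * B) ^ 2) * ENNReal.ofReal ((1 + ξ ^ 2)⁻¹) := by
    intro ξ
    have hp : (0:ℝ) < 1 + ξ ^ 2 := by positivity
    have hs2 : Real.sqrt (1 + ξ ^ 2) ^ 2 = 1 + ξ ^ 2 := Real.sq_sqrt hp.le
    have hspos : (0:ℝ) < Real.sqrt (1 + ξ ^ 2) := Real.sqrt_pos.mpr hp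
    -- step (ii)/(iii): ofReal √ * ‖h‖₊ ≤ ofReal(√⁻¹) * 8 * (A*B)
    have step : ENNReal.ofReal (Real.sqrt (1 + ξ ^ 2)) * (‖h ξ‖₊ : ℝ≥0∞) ≤
        ENNReal.ofReal ((Real.sqrt (1 + ξ ^ 2))⁻¹) * (8 * (A * B)) := by
      have s1 : ENNReal.ofReal (Real.sqrt (1 + ξ ^ 2)) * (‖h ξ‖₊ : ℝ≥0∞) ≤
          ENNReal.ofReal (mN ℓ N ξ) * (‖prodHat U W ξ‖₊ : ℝ≥0∞) := by
        rw [← enorm_eq_nnnorm, ← enorm_eq_nnnorm, ← ofReal_norm, ← ofReal_norm,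
          ← ENNReal.ofReal_mul (Real.sqrt_nonneg _),
          ← ENNReal.ofReal_mul (mN_nonneg (ℓ := ℓ) hN ξ)]
        exact ENNReal.ofReal_le_ofReal (hnorm ξ)
      have s2 : ENNReal.ofReal (mN ℓ N ξ) * (‖prodHat U W ξ‖₊ : ℝ≥0∞) ≤
          ENNReal.ofReal ((Real.sqrt (1 + ξ ^ 2))⁻¹) * (8 * (∫⁻ η : ℝ, f η * g (ξ - η))) := by
        calc ENNReal.ofReal (mN ℓ N ξ) * (‖prodHat U W ξ‖₊ : ℝ≥0∞)
            ≤ ENNReal.ofReal (mN ℓ N ξ) *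
              ∫⁻ η : ℝ, (‖U η‖₊ : ℝ≥0∞) * (‖W (ξ - η)‖₊ : ℝ≥0∞) :=
              mul_le_mul_right (hPbound ξ) _
          _ = ∫⁻ η : ℝ, ENNReal.ofReal (mN ℓ N ξ) *
                ((‖U η‖₊ : ℝ≥0∞) * (‖W (ξ - η)‖₊ : ℝ≥0∞)) :=
              (lintegral_const_mul' _ _ ENNReal.ofReal_ne_top).symm
          _ ≤ ∫⁻ η : ℝ, ENNReal.ofReal ((Real.sqrt (1 + ξ ^ 2))⁻¹) *
                (8 * (f η * g (ξ - η))) := by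
              refine lintegral_mono fun η => ?_
              have hkey : mN ℓ N ξ ≤
                  (Real.sqrt (1 + ξ ^ 2))⁻¹ * (8 * (Mf η * Mf (ξ - η))) := by
                have := M_submul hl0 hl1 hN ξ η
                have h3 : mN ℓ N ξ = (Real.sqrt (1 + ξ ^ 2))⁻¹ * Mf ξ := by
                  simp only [hMfdef]
                  field_simp
                rw [h3]
                have : Mf ξ ≤ 8 * (Mf η * Mf (ξ - η)) := by
                  simp only [hMfdef]; nlinarith [this]
                exact mul_le_mul_of_nonneg_left this (by positivity)
              calc ENNReal.ofReal (mN ℓ N ξ) * ((‖U η‖₊ : ℝ≥0∞) * (‖W (ξ - η)‖₊ : ℝ≥0∞))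
                  ≤ ENNReal.ofReal ((Real.sqrt (1 + ξ ^ 2))⁻¹ * (8 * (Mf η * Mf (ξ - η)))) *
                    ((‖U η‖₊ : ℝ≥0∞) * (‖W (ξ - η)‖₊ : ℝ≥0∞)) :=
                    mul_le_mul_left (ENNReal.ofReal_le_ofReal hkey) _
                _ = ENNReal.ofReal ((Real.sqrt (1 + ξ ^ 2))⁻¹) * (8 * (f η * g (ξ - η))) := by
                    rw [ENNReal.ofReal_mul (by positivity),
                      ENNReal.ofReal_mul (by norm_num : (0:ℝ) ≤ 8),
                      ENNReal.ofReal_mul (hMf0 η)]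
                    simp only [hfdef, hgdef]
                    rw [ENNReal.ofReal_ofNat]
                    ring
          _ = ENNReal.ofReal ((Real.sqrt (1 + ξ ^ 2))⁻¹) *
                (8 * (∫⁻ η : ℝ, f η * g (ξ - η))) := by
              rw [lintegral_const_mul' _ _ ENNReal.ofReal_ne_top,
                lintegral_const_mul' _ _ (by norm_num)]
      refine le_trans s1 (le_trans s2 ?_)
      exact mul_le_mul_right (mul_le_mul_right (hCS ξ) _) _
    -- square the inequality
    have hsq := pow_le_pow_left₀ zero_le step 2
    calc ENNReal.ofReal ((1 + ξ ^ 2) ^ (1:ℝ)) * (‖h ξ‖₊ : ℝ≥0∞) ^ 2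
        = (ENNReal.ofReal (Real.sqrt (1 + ξ ^ 2)) * (‖h ξ‖₊ : ℝ≥0∞)) ^ 2 := by
          rw [mul_pow, ← ENNReal.ofReal_pow (Real.sqrt_nonneg _), hs2, Real.rpow_one]
      _ ≤ (ENNReal.ofReal ((Real.sqrt (1 + ξ ^ 2))⁻¹) * (8 * (A * B))) ^ 2 := hsq
      _ = (64 * (A * B) ^ 2) * ENNReal.ofReal ((1 + ξ ^ 2)⁻¹) := by
          rw [mul_pow, ← ENNReal.ofReal_pow (by positivity), mul_pow]
          rw [show ((Real.sqrt (1 + ξ ^ 2))⁻¹) ^ 2 = ((1 + ξ ^ 2)⁻¹ : ℝ) by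
            rw [inv_pow, hs2]]
          rw [show ((8:ℝ≥0∞)) ^ 2 = 64 by norm_num]
          ring
  -- integrate
  have hπ : (∫⁻ ξ : ℝ, ENNReal.ofReal ((1 + ξ ^ 2)⁻¹)) = ENNReal.ofReal π := by
    rw [← MeasureTheory.ofReal_integral_eq_lintegral_ofReal integrable_inv_one_add_sq
      (Filter.Eventually.of_forall fun ξ => by positivity)]
    rw [integral_univ_inv_one_add_sq]
  have hABne : A * B ≠ ⊤ := ENNReal.mul_ne_top hIU.2.ne hIW.2.ne
  have hmain : HsE 1 h ≤ ENNReal.ofReal 16 * (A * B) := by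
    unfold HsE
    calc (∫⁻ ξ : ℝ, ENNReal.ofReal ((1 + ξ ^ 2) ^ (1:ℝ)) * (‖h ξ‖₊ : ℝ≥0∞) ^ 2) ^ (1/2:ℝ)
        ≤ (∫⁻ ξ : ℝ, (64 * (A * B) ^ 2) * ENNReal.ofReal ((1 + ξ ^ 2)⁻¹)) ^ (1/2:ℝ) := by
          refine ENNReal.rpow_le_rpow (lintegral_mono hpt) (by norm_num)
      _ = ((64 * (A * B) ^ 2) * ENNReal.ofReal π) ^ (1/2:ℝ) := by
          rw [lintegral_const_mul' _ _
            (ENNReal.mul_ne_top (by norm_num) (ENNReal.pow_ne_top hABne)), hπ]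
      _ ≤ (256 * (A * B) ^ 2) ^ (1/2:ℝ) := by
          refine ENNReal.rpow_le_rpow ?_ (by norm_num)
          calc (64 * (A * B) ^ 2) * ENNReal.ofReal π ≤ (64 * (A * B) ^ 2) * 4 := by
                refine mul_le_mul_right ?_ _
                refine le_trans (ENNReal.ofReal_le_ofReal Real.pi_le_four) ?_
                simp
            _ = 256 * (A * B) ^ 2 := by ring
      _ = 16 * (A * B) := by
          rw [ENNReal.mul_rpow_of_nonneg _ _ (by norm_num : (0:ℝ) ≤ 1/2)]
          congr 1
          · rw [show (256:ℝ≥0∞) = 16 ^ (2:ℕ) by norm_num, ← ENNReal.rpow_natCast,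
              ← ENNReal.rpow_mul]
            norm_num
          · rw [← ENNReal.rpow_natCast (A*B) 2, ← ENNReal.rpow_mul]
            norm_num
      _ = ENNReal.ofReal 16 * (A * B) := by
          congr 1
          simp [ENNReal.ofReal_ofNat]
  -- measurability of h
  have hhm : AEStronglyMeasurable h volume := by
    have hU'm : StronglyMeasurable (hU.1.mk U) := hU.1.stronglyMeasurable_mk
    have hW'm : StronglyMeasurable (hW.1.mk W) := hW.1.stronglyMeasurable_mk
    have hPeq : prodHat U W = prodHat (hU.1.mk U) (hW.1.mk W) := by
      funext ξ
      simp only [prodHat, convolution_def]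
      refine integral_congr_ae ?_
      have h1 : U =ᵐ[volume] hU.1.mk U := hU.1.ae_eq_mk
      have h2 : (fun η : ℝ => W (ξ - η)) =ᵐ[volume] fun η : ℝ => hW.1.mk W (ξ - η) :=
        (Measure.measurePreserving_sub_left volume ξ).quasiMeasurePreserving.ae_eq_comp
          hW.1.ae_eq_mk
      filter_upwards [h1, h2] with η e1 e2
      simp only [e1, e2]
    have hP'm : StronglyMeasurable (prodHat (hU.1.mk U) (hW.1.mk W)) := by
      have heq : prodHat (hU.1.mk U) (hW.1.mk W) =
          fun ξ : ℝ => ∫ η : ℝ, hU.1.mk U η * hW.1.mk W (ξ - η) := by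
        funext ξ; simp [prodHat, convolution_def, ContinuousLinearMap.mul_apply']
      rw [heq]
      refine StronglyMeasurable.integral_prod_right ?_
      refine Measurable.stronglyMeasurable ?_
      have : Function.uncurry (fun ξ η : ℝ => hU.1.mk U η * hW.1.mk W (ξ - η)) =
          fun p : ℝ × ℝ => hU.1.mk U p.2 * hW.1.mk W (p.1 - p.2) := rfl
      rw [this]
      exact (hU'm.measurable.comp measurable_snd).mul
        (hW'm.measurable.comp (measurable_fst.sub measurable_snd))
    have hscal : Measurable fun ξ : ℝ =>
        Complex.I * (ξ : ℂ) * ((mN ℓ N ξ : ℝ) : ℂ) * (((1 + ξ ^ 2)⁻¹ : ℝ) : ℂ) := by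
      refine Measurable.mul (Measurable.mul (Measurable.mul measurable_const ?_) ?_) ?_
      · exact Complex.measurable_ofReal
      · exact Complex.measurable_ofReal.comp hmN
      · exact Complex.measurable_ofReal.comp
          ((measurable_const.add (measurable_id.pow_const 2)).inv)
    have : AEStronglyMeasurable (fun ξ : ℝ =>
        (Complex.I * (ξ : ℂ) * ((mN ℓ N ξ : ℝ) : ℂ) * (((1 + ξ ^ 2)⁻¹ : ℝ) : ℂ)) *
          prodHat U W ξ) volume := by
      refine AEStronglyMeasurable.mul hscal.aestronglyMeasurable ?_
      rw [hPeq]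
      exact hP'm.aestronglyMeasurable
    simpa only [hhdef] using this
  refine ⟨⟨hhm, lt_of_le_of_lt hmain ?_⟩, hmain⟩
  exact ENNReal.mul_lt_top ENNReal.ofReal_lt_top hABne.lt_top
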